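/- Let x be a non-empty string and define the border chain B₀ = x and B_{i+1} = Border(B_i) (the longest border of B_i) for i ≥ 0, so that the B_i strictly decrease in length until reaching the empty string. Let j* be the largest index j such that B_j is non-empty and B_j is a cover of B_g for every 0 ≤ g < j. Then B_{j*} is the shortest cover of x. -/

import Mathlib

/-!
Every cover of `x` other than `x` itself is a border of `x`, and every border of `B i` is the
longest border `B (i + 1)` or a border of it, so each cover of `x` is some `B m` of the chain.
Such a `B m` covers every `B g` with `g < m`, because `B g` is a prefix of `x` ending with `B m`.
Maximality of `j*` then gives `m ≤ j*`, and `B j*`, lying further down the chain, is a prefix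
of `B m`, hence no longer.
-/

/-- `v` occurs in `x` at position `j`:
`0 ≤ j ≤ |x| - |v|` and `x[j .. j+|v|-1] = v`. -/
def Occurs {α : Type*} (v x : List α) (j : ℕ) : Prop :=
  (x.drop j).take v.length = v

/-- `v` is a cover of `x`: every position of `x` lies inside some occurrence of `v`. -/
def IsCover {α : Type*} (v x : List α) : Prop :=
  ∀ i, i < x.length → ∃ j, Occurs v x j ∧ j ≤ i ∧ i < j + v.length

/-- `w` is a border of `x`: a prefix and a suffix of `x` different from `x`. -/
def IsBorder {α : Type*} (w x : List α) : Prop :=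
  w <+: x ∧ w <:+ x ∧ w ≠ x

section Strings

variable {α : Type*} {v w x : List α} {j : ℕ}

def IsLongestBorder (w x : List α) : Prop :=
  IsBorder w x ∧ ∀ v, IsBorder v x → v.length ≤ w.length

namespace Occurs

theorem length_le (h : Occurs v x j) : v.length ≤ x.length - j := by
  have hlen : ((x.drop j).take v.length).length ≤ x.length - j :=
    List.length_drop (l := x) ▸ (x.drop j).length_take_le' _
  rwa [show (x.drop j).take v.length = v from h] at hlen

theorem of_isPrefix (h : Occurs v x j) (hj : j + v.length ≤ w.length) (hwx : w <+: x) :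
    Occurs v w j := by
  obtain ⟨t, rfl⟩ := hwx
  rwa [Occurs, List.drop_append_of_le_length (by omega),
    List.take_append_of_le_length (by rw [List.length_drop]; omega)] at h

end Occurs

theorem occurs_zero_iff : Occurs v x 0 ↔ v <+: x := by
  rw [Occurs, List.drop_zero, List.prefix_iff_eq_take, eq_comm]

theorem occurs_sub_length_iff (h : v.length ≤ x.length) :
    Occurs v x (x.length - v.length) ↔ v <:+ x := by
  rw [Occurs, List.suffix_iff_eq_drop, eq_comm, List.take_of_length_le]
  rw [List.length_drop]
  omega

namespace IsCover

theorem refl (x : List α) : IsCover x x :=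
  fun i hi => ⟨0, occurs_zero_iff.2 List.prefix_rfl, i.zero_le, by omega⟩

theorem ne_nil (hx : x ≠ []) (h : IsCover v x) : v ≠ [] := by
  obtain ⟨j, -, hj, hlt⟩ := h 0 (List.length_pos_iff.2 hx)
  rintro rfl
  rw [List.length_nil] at hlt
  omega

theorem isPrefix (hx : x ≠ []) (h : IsCover v x) : v <+: x := by
  obtain ⟨j, hocc, hj, -⟩ := h 0 (List.length_pos_iff.2 hx)
  obtain rfl : j = 0 := Nat.le_zero.1 hj
  exact occurs_zero_iff.1 hocc

theorem isSuffix (hx : x ≠ []) (h : IsCover v x) : v <:+ x := by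
  obtain ⟨j, hocc, hj, hlt⟩ := h (x.length - 1) (by simpa [Nat.pos_iff_ne_zero] using hx)
  have hend := hocc.length_le
  obtain rfl : j = x.length - v.length := by omega
  exact (occurs_sub_length_iff (by omega)).1 hocc

/-- Occurrences of `v` in `x` running past the end of the prefix `w` are replaced by the
occurrence of `v` as a suffix of `w`. -/
theorem of_isSuffix_of_isPrefix (h : IsCover v x) (hvw : v <:+ w) (hwx : w <+: x) :
    IsCover v w := by
  intro i hi
  obtain ⟨j, hocc, hji, hij⟩ := h i (hi.trans_le hwx.length_le)
  by_cases hfit : j + v.length ≤ w.length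
  · exact ⟨j, hocc.of_isPrefix hfit hwx, hji, hij⟩
  · have := hvw.length_le
    exact ⟨w.length - v.length, (occurs_sub_length_iff this).2 hvw, by omega, by omega⟩

end IsCover

theorem IsBorder.ne_nil_right (h : IsBorder w x) : x ≠ [] := by
  rintro rfl
  exact h.2.2 (List.prefix_nil.1 h.1)

theorem IsBorder.length_lt (h : IsBorder w x) : w.length < x.length :=
  h.1.length_le.lt_of_ne fun hlen => h.2.2 (h.1.eq_of_length hlen)

theorem IsLongestBorder.eq_or_isBorder (hw : IsLongestBorder w x) (hv : IsBorder v x) :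
    v = w ∨ IsBorder v w := by
  have hle := hw.2 v hv
  obtain hlen | hne := eq_or_ne v.length w.length
  · exact .inl ((List.prefix_of_prefix_length_le hv.1 hw.1.1 hle).eq_of_length hlen)
  · exact .inr ⟨List.prefix_of_prefix_length_le hv.1 hw.1.1 hle,
      List.suffix_of_suffix_length_le hv.2.1 hw.1.2.1 hle, fun h => hne (congrArg _ h)⟩

section BorderChain

variable {B : ℕ → List α}

theorem exists_eq_of_isBorder (hB : ∀ i, B i ≠ [] → IsLongestBorder (B (i + 1)) (B i))
    {i : ℕ} (hv : IsBorder v (B i)) : ∃ m, i < m ∧ B m = v := by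
  have hlong := hB i hv.ne_nil_right
  rcases hlong.eq_or_isBorder hv with rfl | hv'
  · exact ⟨i + 1, i.lt_succ_self, rfl⟩
  · obtain ⟨m, hm, rfl⟩ := exists_eq_of_isBorder hB hv'
    exact ⟨m, by omega, rfl⟩
termination_by (B i).length
decreasing_by exact hlong.1.length_lt

theorem isPrefix_isSuffix_of_le (hB : ∀ i, B i ≠ [] → IsLongestBorder (B (i + 1)) (B i))
    (hstop : ∀ i, B i = [] → B (i + 1) = []) {i k : ℕ} (hik : i ≤ k) :
    B k <+: B i ∧ B k <:+ B i := by
  induction k, hik using Nat.le_induction with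
  | base => exact ⟨List.prefix_rfl, List.suffix_rfl⟩
  | succ k _ ih =>
    by_cases hk : B k = []
    · rw [hstop k hk]
      exact ⟨List.nil_prefix, List.nil_suffix⟩
    · have hborder := (hB k hk).1
      exact ⟨hborder.1.trans ih.1, hborder.2.1.trans ih.2⟩

end BorderChain

end Strings

/-- correctness of the border-chain algorithm for shortest covers.
Let `x` be a non-empty string and let `B 0 = x`, `B (i+1) = Border (B i)` the longest
border of `B i` (with `B (i+1) = []` once `B i = []`).  Let `jstar` be the largest
index `j` such that `B j` is non-empty and `B j` is a cover of `B g` for every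
`g < j`.  Then `B jstar` is the shortest cover of `x`. -/
theorem stmt_13 {α : Type*} (x : List α) (hx : x ≠ [])
    (B : ℕ → List α) (hB0 : B 0 = x)
    (hchain : ∀ i, B i ≠ [] → IsBorder (B (i + 1)) (B i) ∧
      ∀ w, IsBorder w (B i) → w.length ≤ (B (i + 1)).length)
    (hstop : ∀ i, B i = [] → B (i + 1) = [])
    (jstar : ℕ)
    (hjs : B jstar ≠ [] ∧ ∀ g, g < jstar → IsCover (B jstar) (B g))
    (hjsmax : ∀ j, B j ≠ [] → (∀ g, g < j → IsCover (B j) (B g)) → j ≤ jstar) :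
    IsCover (B jstar) x ∧ ∀ v, IsCover v x → (B jstar).length ≤ v.length := by
  have hchain_le (i k : ℕ) (hik : i ≤ k) := isPrefix_isSuffix_of_le hchain hstop hik
  subst hB0
  refine ⟨?_, fun v hv => ?_⟩
  · obtain h | h := Nat.eq_zero_or_pos jstar
    · exact h ▸ IsCover.refl _
    · exact hjs.2 0 h
  obtain rfl | hvx := eq_or_ne v (B 0)
  · exact (hchain_le 0 jstar jstar.zero_le).1.length_le
  obtain ⟨m, -, rfl⟩ := exists_eq_of_isBorder hchain (i := 0)
    ⟨hv.isPrefix hx, hv.isSuffix hx, hvx⟩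
  have hcov (g : ℕ) (hg : g < m) : IsCover (B m) (B g) :=
    hv.of_isSuffix_of_isPrefix (hchain_le g m hg.le).2 (hchain_le 0 g g.zero_le).1
  exact (hchain_le m jstar (hjsmax m (hv.ne_nil hx) hcov)).1.length_le
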